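/- arXiv:2006.00564 — 3 statements merged into one kernel-verified Lean document; each statement's English description precedes it below -/
import Mathlib

section
/- Fix M ≥ 2 and continuously differentiable functions f¹, …, f^{M−1} : ℝ^{M−1} → ℝ. Define the skew-symmetric matrix-valued map π : ℝ^M → Matrix(M,M,ℝ) by π_{μ M}(x) = f^μ(x¹,…,x^{M−1}) for μ ∈ {1,…,M−1}, π_{μ ν}(x) = 0 for μ,ν ∈ {1,…,M−1}, and skew-symmetry determining the remaining entries. Then π satisfies the Jacobi identity: for all x and indices μ,ν,λ, ∑_σ (π_{σ λ}(x)·∂_σ π_{μ ν}(x) + π_{σ μ}(x)·∂_σ π_{ν λ}(x) + π_{σ ν}(x)·∂_σ π_{λ μ}(x)) = 0. -/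
/-!
Only the last row and column of `π` are nonzero, and `π` does not depend on the last coordinate.
Hence every term `π_{σ μ} ∂_σ π_{ν λ}` with `μ ≠ M` vanishes: for `σ ≠ M` the factor `π_{σ μ}` is
zero, for `σ = M` the derivative is. Since the Jacobi expression `J_{μ ν λ}` of a skew-symmetric field is
cyclic and vanishes when two indices coincide, it remains to treat `J` with `μ, ν ≠ M`
(up to rotation); there the first two terms vanish as above and the third because `π_{μ ν} ≡ 0`.
-/

/-- A pointwise skew-symmetric matrix-valued map `P : ℝⁿ → Matrix(n,n,ℝ)` satisfies the
Jacobi identity if for all `x` and indices `i j k`,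
`∑ l, (P_{l i}(x)·∂_l P_{j k}(x) + P_{l j}(x)·∂_l P_{k i}(x) + P_{l k}(x)·∂_l P_{i j}(x)) = 0`. -/
def JacobiIdentity {n : Type*} [Fintype n] [DecidableEq n]
    (P : (n → ℝ) → Matrix n n ℝ) : Prop :=
  ∀ x : n → ℝ, ∀ i j k : n,
    ∑ l : n,
      (P x l i * fderiv ℝ (fun y => P y j k) x (Pi.single l 1) +
        P x l j * fderiv ℝ (fun y => P y k i) x (Pi.single l 1) +
        P x l k * fderiv ℝ (fun y => P y i j) x (Pi.single l 1)) = 0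

/-- The Poisson structure of a compartmental model with `M = n + 1` compartments and
constant population: `π_{μ M}(x) = f^μ(x¹,…,x^{M−1})` for `μ < M`, `π_{μ ν} = 0` for
`μ, ν < M`, skew-symmetry determining the remaining entries. -/
noncomputable def compPoisson (n : ℕ) (f : Fin n → (Fin n → ℝ) → ℝ)
    (x : Fin (n + 1) → ℝ) : Matrix (Fin (n + 1)) (Fin (n + 1)) ℝ :=
  fun i j =>
    if hi : (i : ℕ) < n then
      if (j : ℕ) = n then f ⟨i, hi⟩ (fun μ => x μ.castSucc) else 0
    else if hj : (j : ℕ) < n then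
      if (i : ℕ) = n then -f ⟨j, hj⟩ (fun μ => x μ.castSucc) else 0
    else 0

/-- Where `g` is not differentiable, `fderiv` is `0`. -/
theorem fderiv_apply_eq_zero_of_forall_add_smul_eq {E F : Type*} [NormedAddCommGroup E]
    [NormedSpace ℝ E] [NormedAddCommGroup F] [NormedSpace ℝ F] {g : E → F} {x v : E}
    (hg : ∀ t : ℝ, g (x + t • v) = g x) : fderiv ℝ g x v = 0 := by
  by_cases hdiff : DifferentiableAt ℝ g x
  · rw [← hdiff.lineDeriv_eq_fderiv, lineDeriv, funext hg, deriv_const]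
  · simp [fderiv_zero_of_not_differentiableAt hdiff]

namespace JacobiIdentity

variable {ι : Type*} [Fintype ι] [DecidableEq ι] (P : (ι → ℝ) → Matrix ι ι ℝ)

noncomputable def jacobiator (x : ι → ℝ) (i j k : ι) : ℝ :=
  ∑ l : ι,
    (P x l i * fderiv ℝ (fun y => P y j k) x (Pi.single l 1) +
      P x l j * fderiv ℝ (fun y => P y k i) x (Pi.single l 1) +
      P x l k * fderiv ℝ (fun y => P y i j) x (Pi.single l 1))

theorem jacobiator_rotate (x : ι → ℝ) (i j k : ι) :
    jacobiator P x i j k = jacobiator P x j k i :=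
  Finset.sum_congr rfl fun _ _ => by ring

variable {P}

theorem jacobiator_self_left (hskew : ∀ y i j, P y j i = -P y i j) (x : ι → ℝ) (i k : ι) :
    jacobiator P x i i k = 0 := by
  have hflip : (fun y => P y k i) = fun y => -P y i k := funext fun y => hskew y i k
  have hdiag : (fun y => P y i i) = fun _ => 0 :=
    funext fun y => by linarith [hskew y i i]
  refine Finset.sum_eq_zero fun l _ => ?_
  simp only [hflip, hdiag, fderiv_fun_neg, fderiv_fun_const, neg_apply,
    Pi.zero_apply, zero_apply]
  ring

theorem jacobiator_eq_zero_of_mem {S : Set ι} (hzero : ∀ y, ∀ a ∈ S, ∀ b ∈ S, P y a b = 0)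
    (hinv : ∀ y, ∀ l ∉ S, ∀ t : ℝ, P (y + t • Pi.single l 1) = P y)
    (x : ι → ℝ) {a b : ι} (ha : a ∈ S) (hb : b ∈ S) (k : ι) :
    jacobiator P x a b k = 0 := by
  have hab : (fun y => P y a b) = fun _ => 0 := funext fun y => hzero y a ha b hb
  refine Finset.sum_eq_zero fun l _ => ?_
  by_cases hl : l ∈ S
  · simp [hzero x l hl a ha, hzero x l hl b hb, hab]
  · have hderiv : ∀ i j, fderiv ℝ (fun y => P y i j) x (Pi.single l 1) = 0 := fun i j =>
      fderiv_apply_eq_zero_of_forall_add_smul_eq fun t => by rw [hinv x l hl t]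
    simp [hderiv]

theorem of_subsingleton_compl (hskew : ∀ y i j, P y j i = -P y i j) {S : Set ι}
    (hS : Sᶜ.Subsingleton) (hzero : ∀ y, ∀ a ∈ S, ∀ b ∈ S, P y a b = 0)
    (hinv : ∀ y, ∀ l ∉ S, ∀ t : ℝ, P (y + t • Pi.single l 1) = P y) :
    JacobiIdentity P := by
  intro x i j k
  change jacobiator P x i j k = 0
  -- Either two of `i, j, k` lie in `S`, or two lie outside `S` and hence coincide.
  by_cases hi : i ∈ S <;> by_cases hj : j ∈ S <;> by_cases hk : k ∈ S
  all_goals first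
    | exact jacobiator_eq_zero_of_mem hzero hinv x hi hj k
    | rw [jacobiator_rotate]; exact jacobiator_eq_zero_of_mem hzero hinv x hj hk i
    | rw [← jacobiator_rotate]; exact jacobiator_eq_zero_of_mem hzero hinv x hk hi j
    | skip
  · rw [hS hj hk, jacobiator_rotate]; exact jacobiator_self_left hskew x k i
  · rw [hS hi hk, ← jacobiator_rotate]; exact jacobiator_self_left hskew x k j
  · rw [hS hi hj]; exact jacobiator_self_left hskew x j k
  · rw [hS hi hj]; exact jacobiator_self_left hskew x j k

end JacobiIdentity

namespace compPoisson

variable {n : ℕ} (f : Fin n → (Fin n → ℝ) → ℝ)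

theorem apply_swap (y : Fin (n + 1) → ℝ) (i j : Fin (n + 1)) :
    compPoisson n f y j i = -compPoisson n f y i j := by
  rcases Fin.eq_castSucc_or_eq_last i with ⟨a, rfl⟩ | rfl <;>
    rcases Fin.eq_castSucc_or_eq_last j with ⟨b, rfl⟩ | rfl <;>
    simp [compPoisson, (Fin.is_lt _).ne]

theorem apply_of_ne_last (y : Fin (n + 1) → ℝ) {i j : Fin (n + 1)} (hi : i ≠ Fin.last n)
    (hj : j ≠ Fin.last n) : compPoisson n f y i j = 0 := by
  obtain ⟨a, rfl⟩ := Fin.exists_castSucc_eq.2 hi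
  obtain ⟨b, rfl⟩ := Fin.exists_castSucc_eq.2 hj
  simp [compPoisson, b.is_lt.ne]

theorem add_smul_single_last (y : Fin (n + 1) → ℝ) (t : ℝ) :
    compPoisson n f (y + t • Pi.single (Fin.last n) 1) = compPoisson n f y := by
  have hrestrict : (fun μ : Fin n => (y + t • Pi.single (Fin.last n) 1 : Fin (n + 1) → ℝ)
      μ.castSucc) = fun μ => y μ.castSucc :=
    funext fun μ => by simp [(Fin.castSucc_lt_last μ).ne]
  ext i j
  simp only [compPoisson, hrestrict]

end compPoisson

theorem compartmental_poisson_jacobi_general (n : ℕ)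
    (f : Fin n → (Fin n → ℝ) → ℝ) :
    JacobiIdentity (compPoisson n f) := by
  refine JacobiIdentity.of_subsingleton_compl (compPoisson.apply_swap f)
    (S := {Fin.last n}ᶜ) (by simp) ?_ ?_
  · intro y i hi j hj
    exact compPoisson.apply_of_ne_last f y hi hj
  · intro y l hl t
    obtain rfl : l = Fin.last n := by simpa using hl
    exact compPoisson.add_smul_single_last f y t

theorem compartmental_poisson_jacobi (n : ℕ) (hn : 1 ≤ n)
    (f : Fin n → (Fin n → ℝ) → ℝ) (hf : ∀ μ, ContDiff ℝ 1 (f μ)) :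
    JacobiIdentity (compPoisson n f) :=
  compartmental_poisson_jacobi_general n f
end

section
/- Fix M ≥ 2 and functions f¹, …, f^{M−1} : ℝ^{M−1} → ℝ. Let π : ℝ^M → Matrix(M,M,ℝ) be the skew-symmetric matrix-valued map with π_{μ M}(x) = f^μ(x¹,…,x^{M−1}) for μ ∈ {1,…,M−1} and π_{μ ν}(x) = 0 for μ,ν ∈ {1,…,M−1}, and let H(x) = ∑_{μ=1}^M x^μ. Then for every x ∈ ℝ^M, (π(x)·∇H(x))_μ = f^μ(x¹,…,x^{M−1}) for μ ∈ {1,…,M−1} and (π(x)·∇H(x))_M = −∑_{μ=1}^{M−1} f^μ(x¹,…,x^{M−1}). Hence every compartmental model with constant population is a Hamiltonian system with Hamiltonian equal to the total population. -/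
/-- The Hamiltonian vector field `π(x)·∇H(x)` of a matrix-valued map `P` and Hamiltonian `H`. -/
noncomputable def hamVF {n : Type*} [Fintype n] [DecidableEq n]
    (P : (n → ℝ) → Matrix n n ℝ) (H : (n → ℝ) → ℝ) (x : n → ℝ) : n → ℝ :=
  (P x).mulVec fun j => fderiv ℝ H x (Pi.single j 1)

theorem fderiv_sum_apply_single {ι : Type*} [Fintype ι] [DecidableEq ι] (x : ι → ℝ) (j : ι) :
    fderiv ℝ (fun y : ι → ℝ => ∑ i, y i) x (Pi.single j 1) = 1 := by
  rw [(HasFDerivAt.fun_sum fun i _ => hasFDerivAt_apply i x).fderiv]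
  simp [Pi.single_apply]

theorem hamVF_sum_apply {ι : Type*} [Fintype ι] [DecidableEq ι]
    (P : (ι → ℝ) → Matrix ι ι ℝ) (x : ι → ℝ) (i : ι) :
    hamVF P (fun y => ∑ j, y j) x i = ∑ j, P x i j := by
  simp only [hamVF, Matrix.mulVec, dotProduct, fderiv_sum_apply_single, mul_one]

section compPoisson

variable {n : ℕ} (f : Fin n → (Fin n → ℝ) → ℝ) (x : Fin (n + 1) → ℝ)

theorem compPoisson_castSucc_castSucc (μ ν : Fin n) :
    compPoisson n f x μ.castSucc ν.castSucc = 0 := by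
  simp [compPoisson, ν.isLt.ne]

theorem compPoisson_castSucc_last (μ : Fin n) :
    compPoisson n f x μ.castSucc (Fin.last n) = f μ (fun ν => x ν.castSucc) := by
  simp [compPoisson]

theorem compPoisson_last_castSucc (ν : Fin n) :
    compPoisson n f x (Fin.last n) ν.castSucc = -f ν (fun μ => x μ.castSucc) := by
  simp [compPoisson]

theorem compPoisson_last_last : compPoisson n f x (Fin.last n) (Fin.last n) = 0 := by
  simp [compPoisson]

theorem sum_compPoisson_castSucc (μ : Fin n) :
    ∑ j, compPoisson n f x μ.castSucc j = f μ (fun ν => x ν.castSucc) := by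
  simp [Fin.sum_univ_castSucc, compPoisson_castSucc_castSucc, compPoisson_castSucc_last]

theorem sum_compPoisson_last :
    ∑ j, compPoisson n f x (Fin.last n) j = -∑ μ, f μ (fun ν => x ν.castSucc) := by
  simp [Fin.sum_univ_castSucc, compPoisson_last_castSucc, compPoisson_last_last]

end compPoisson

theorem compartmental_hamiltonian_general (n : ℕ)
    (f : Fin n → (Fin n → ℝ) → ℝ) :
    ∀ x : Fin (n + 1) → ℝ,
      (∀ μ : Fin n,
        hamVF (compPoisson n f) (fun y => ∑ ν, y ν) x μ.castSucc =
          f μ (fun ν => x ν.castSucc)) ∧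
      hamVF (compPoisson n f) (fun y => ∑ ν, y ν) x (Fin.last n) =
        -∑ μ : Fin n, f μ (fun ν => x ν.castSucc) := fun x =>
  ⟨fun μ => by rw [hamVF_sum_apply, sum_compPoisson_castSucc],
    by rw [hamVF_sum_apply, sum_compPoisson_last]⟩

/-- Every compartmental model with constant population is a Hamiltonian system, with
Hamiltonian the total population `H(x) = ∑ μ, x^μ`: the Hamiltonian vector field of the
compartmental Poisson structure reproduces the compartmental dynamics. -/
theorem compartmental_hamiltonian (n : ℕ) (hn : 1 ≤ n)
    (f : Fin n → (Fin n → ℝ) → ℝ) :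
    ∀ x : Fin (n + 1) → ℝ,
      (∀ μ : Fin n,
        hamVF (compPoisson n f) (fun y => ∑ ν, y ν) x μ.castSucc =
          f μ (fun ν => x ν.castSucc)) ∧
      hamVF (compPoisson n f) (fun y => ∑ ν, y ν) x (Fin.last n) =
        -∑ μ : Fin n, f μ (fun ν => x ν.castSucc) :=
  compartmental_hamiltonian_general n f
end

section
/- Fix N ≥ 1, constants α_a, β_a ∈ ℝ, functions φ_{a,1}, φ_{a,2} : ℝ² → ℝ, and functions τ_{ab} : ℝ⁴ → ℝ for a ≠ b. With π the skew-symmetric matrix-valued map on ℝ^{3N} with entries π_{I_a R_a} = −α_a·I_a + β_a·S_a·I_a + φ_{a,2}(S_a,I_a), π_{S_a R_a} = −β_a·S_a·I_a + φ_{a,1}(S_a,I_a), π_{S_a I_a} = 0, π_{R_a R_b} = −τ_{ab}(S_a,I_a,S_b,I_b), all other independent entries zero, and Hamiltonian H = ∑_{k=1}^N (S_k + I_k + R_k), the vector field π·∇H has components (π·∇H)_{S_a} = −β_a·S_a·I_a + φ_{a,1}(S_a,I_a), (π·∇H)_{I_a} = β_a·S_a·I_a − α_a·I_a + φ_{a,2}(S_a,I_a),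 (π·∇H)_{R_a} = α_a·I_a − φ_{a,1}(S_a,I_a) − φ_{a,2}(S_a,I_a) − ∑_{k≠a} τ_{ak}(S_a,I_a,S_k,I_k). -/
/-- The Poisson structure of `N` interacting generalized SIR populations, on `ℝ^{3N}` with
coordinates `(S_a, I_a, R_a) = (x (a,0), x (a,1), x (a,2))`:
`π_{S_a I_a} = 0`, `π_{S_a R_a} = −β_a·S_a·I_a + φ_{a,1}(S_a,I_a)`,
`π_{I_a R_a} = −α_a·I_a + β_a·S_a·I_a + φ_{a,2}(S_a,I_a)`,
`π_{R_a R_b} = −τ_{ab}(S_a,I_a,S_b,I_b)` for `a ≠ b`, all other independent entries zero. -/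
noncomputable def intSirPoisson (N : ℕ) (α β : Fin N → ℝ)
    (φ₁ φ₂ : Fin N → ℝ × ℝ → ℝ) (τ : Fin N → Fin N → ℝ × ℝ × ℝ × ℝ → ℝ)
    (x : Fin N × Fin 3 → ℝ) : Matrix (Fin N × Fin 3) (Fin N × Fin 3) ℝ :=
  fun p q =>
    if p.1 = q.1 then
      if p.2 = 0 ∧ q.2 = 2 then
        -β p.1 * x (p.1, 0) * x (p.1, 1) + φ₁ p.1 (x (p.1, 0), x (p.1, 1))
      else if p.2 = 2 ∧ q.2 = 0 then
        -(-β p.1 * x (p.1, 0) * x (p.1, 1) + φ₁ p.1 (x (p.1, 0), x (p.1, 1)))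
      else if p.2 = 1 ∧ q.2 = 2 then
        -α p.1 * x (p.1, 1) + β p.1 * x (p.1, 0) * x (p.1, 1) + φ₂ p.1 (x (p.1, 0), x (p.1, 1))
      else if p.2 = 2 ∧ q.2 = 1 then
        -(-α p.1 * x (p.1, 1) + β p.1 * x (p.1, 0) * x (p.1, 1) + φ₂ p.1 (x (p.1, 0), x (p.1, 1)))
      else 0
    else
      if p.2 = 2 ∧ q.2 = 2 then
        -τ p.1 q.1 (x (p.1, 0), x (p.1, 1), x (q.1, 0), x (q.1, 1))
      else 0

/-!
Since `H` is the sum of all coordinates, `∇H` is the constant vector of ones, so each component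
of `π·∇H` is a row sum of `π`. In the row of `S_a` or `I_a` only the entry in column `R_a` is
nonzero; the row of `R_a` collects `-π_{S_a R_a} - π_{I_a R_a}` and the transference terms
`-τ_{ab}` for `b ≠ a`.
-/

open Finset

theorem fderiv_sum_coords_single {n : Type*} [Fintype n] [DecidableEq n] (x : n → ℝ) (j : n) :
    fderiv ℝ (fun y : n → ℝ => ∑ i, y i) x (Pi.single j 1) = 1 := by
  rw [(HasFDerivAt.fun_sum fun i _ => hasFDerivAt_apply i x).fderiv]
  simp

theorem hamVF_sum_coords {n : Type*} [Fintype n] [DecidableEq n]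
    (P : (n → ℝ) → Matrix n n ℝ) (x : n → ℝ) (i : n) :
    hamVF P (fun y => ∑ j, y j) x i = ∑ j, P x i j := by
  simp only [hamVF, Matrix.mulVec, dotProduct, fderiv_sum_coords_single, mul_one]

theorem Fintype.sum_prod_eq_add_sum_erase {ι κ M : Type*} [Fintype ι] [Fintype κ] [DecidableEq ι]
    [AddCommMonoid M] (f : ι × κ → M) (a : ι) :
    ∑ q, f q = ∑ s, f (a, s) + ∑ b ∈ univ.erase a, ∑ s, f (b, s) := by
  rw [Fintype.sum_prod_type, ← add_sum_erase _ _ (mem_univ a)]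

namespace intSirPoisson

variable {N : ℕ} (α β : Fin N → ℝ) (φ₁ φ₂ : Fin N → ℝ × ℝ → ℝ)
  (τ : Fin N → Fin N → ℝ × ℝ × ℝ × ℝ → ℝ) (x : Fin N × Fin 3 → ℝ)

theorem hamVF_totalPopulation (p : Fin N × Fin 3) :
    hamVF (intSirPoisson N α β φ₁ φ₂ τ)
        (fun y => ∑ k : Fin N, (y (k, 0) + y (k, 1) + y (k, 2))) x p =
      ∑ s, intSirPoisson N α β φ₁ φ₂ τ x p (p.1, s) +
        ∑ b ∈ univ.erase p.1, ∑ s, intSirPoisson N α β φ₁ φ₂ τ x p (b, s) := by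
  have hH : (fun y : Fin N × Fin 3 → ℝ => ∑ k : Fin N, (y (k, 0) + y (k, 1) + y (k, 2))) =
      fun y => ∑ q, y q := by
    simp only [Fintype.sum_prod_type, Fin.sum_univ_three]
  rw [hH, hamVF_sum_coords, Fintype.sum_prod_eq_add_sum_erase]

theorem sum_offDiag_block {a b : Fin N} (hab : a ≠ b) (t : Fin 3) :
    ∑ s, intSirPoisson N α β φ₁ φ₂ τ x (a, t) (b, s) =
      if t = 2 then -τ a b (x (a, 0), x (a, 1), x (b, 0), x (b, 1)) else 0 := by
  fin_cases t <;> simp [intSirPoisson, hab]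

theorem sum_diag_block_S (a : Fin N) :
    ∑ s, intSirPoisson N α β φ₁ φ₂ τ x (a, 0) (a, s) =
      -β a * x (a, 0) * x (a, 1) + φ₁ a (x (a, 0), x (a, 1)) := by
  simp [intSirPoisson]

theorem sum_diag_block_I (a : Fin N) :
    ∑ s, intSirPoisson N α β φ₁ φ₂ τ x (a, 1) (a, s) =
      β a * x (a, 0) * x (a, 1) - α a * x (a, 1) + φ₂ a (x (a, 0), x (a, 1)) := by
  simp [intSirPoisson]
  ring

theorem sum_diag_block_R (a : Fin N) :
    ∑ s, intSirPoisson N α β φ₁ φ₂ τ x (a, 2) (a, s) =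
      α a * x (a, 1) - φ₁ a (x (a, 0), x (a, 1)) - φ₂ a (x (a, 0), x (a, 1)) := by
  simp [intSirPoisson, Fin.sum_univ_three]
  ring

end intSirPoisson

open intSirPoisson in
theorem interactingSIR_hamiltonian_general (N : ℕ) (α β : Fin N → ℝ)
    (φ₁ φ₂ : Fin N → ℝ × ℝ → ℝ) (τ : Fin N → Fin N → ℝ × ℝ × ℝ × ℝ → ℝ) :
    ∀ x : Fin N × Fin 3 → ℝ, ∀ a : Fin N,
      hamVF (intSirPoisson N α β φ₁ φ₂ τ)
          (fun y => ∑ k : Fin N, (y (k, 0) + y (k, 1) + y (k, 2))) x (a, 0) =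
        -β a * x (a, 0) * x (a, 1) + φ₁ a (x (a, 0), x (a, 1)) ∧
      hamVF (intSirPoisson N α β φ₁ φ₂ τ)
          (fun y => ∑ k : Fin N, (y (k, 0) + y (k, 1) + y (k, 2))) x (a, 1) =
        β a * x (a, 0) * x (a, 1) - α a * x (a, 1) + φ₂ a (x (a, 0), x (a, 1)) ∧
      hamVF (intSirPoisson N α β φ₁ φ₂ τ)
          (fun y => ∑ k : Fin N, (y (k, 0) + y (k, 1) + y (k, 2))) x (a, 2) =
        α a * x (a, 1) - φ₁ a (x (a, 0), x (a, 1)) - φ₂ a (x (a, 0), x (a, 1)) -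
          ∑ k ∈ Finset.univ.erase a, τ a k (x (a, 0), x (a, 1), x (k, 0), x (k, 1)) := by
  intro x a
  have offDiag (t : Fin 3) : ∀ b ∈ univ.erase a,
      ∑ s, intSirPoisson N α β φ₁ φ₂ τ x (a, t) (b, s) =
        if t = 2 then -τ a b (x (a, 0), x (a, 1), x (b, 0), x (b, 1)) else 0 :=
    fun b hb => sum_offDiag_block α β φ₁ φ₂ τ x (ne_of_mem_erase hb).symm t
  refine ⟨?_, ?_, ?_⟩ <;>
    simp only [hamVF_totalPopulation, sum_congr rfl (offDiag _), sum_diag_block_S,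
      sum_diag_block_I, sum_diag_block_R] <;>
    simp [sub_eq_add_neg]

/-- With the total population Hamiltonian `H = ∑ₖ (S_k + I_k + R_k)`, the Hamiltonian vector
field of the interacting SIR Poisson structure is the interacting generalized SIR vector
field. -/
theorem interactingSIR_hamiltonian (N : ℕ) (hN : 1 ≤ N) (α β : Fin N → ℝ)
    (φ₁ φ₂ : Fin N → ℝ × ℝ → ℝ) (τ : Fin N → Fin N → ℝ × ℝ × ℝ × ℝ → ℝ) :
    ∀ x : Fin N × Fin 3 → ℝ, ∀ a : Fin N,
      hamVF (intSirPoisson N α β φ₁ φ₂ τ)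
          (fun y => ∑ k : Fin N, (y (k, 0) + y (k, 1) + y (k, 2))) x (a, 0) =
        -β a * x (a, 0) * x (a, 1) + φ₁ a (x (a, 0), x (a, 1)) ∧
      hamVF (intSirPoisson N α β φ₁ φ₂ τ)
          (fun y => ∑ k : Fin N, (y (k, 0) + y (k, 1) + y (k, 2))) x (a, 1) =
        β a * x (a, 0) * x (a, 1) - α a * x (a, 1) + φ₂ a (x (a, 0), x (a, 1)) ∧
      hamVF (intSirPoisson N α β φ₁ φ₂ τ)
          (fun y => ∑ k : Fin N, (y (k, 0) + y (k, 1) + y (k, 2))) x (a, 2) =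
        α a * x (a, 1) - φ₁ a (x (a, 0), x (a, 1)) - φ₂ a (x (a, 0), x (a, 1)) -
          ∑ k ∈ Finset.univ.erase a, τ a k (x (a, 0), x (a, 1), x (k, 0), x (k, 1)) :=
  interactingSIR_hamiltonian_general N α β φ₁ φ₂ τ
end
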